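/- arXiv:1605.05499 — 3 statements merged into one kernel-verified Lean document; each statement's English description precedes it below -/
import Mathlib

section
/- Let G be an n-sum of connected multigraphs K and H along an n-element vertex set U (n ≥ 1), and let y be a real number with y ≠ 1. The connectivity matrix A_n is invertible, and denoting by b'_{AB} the entries of its inverse, T(G;1,y) = Σ_{A,B ∈ Γ(U)} b'_{AB} · (y−1)^{|A|+|B|−n−1} · T(K/A;1,y) · T(H/B;1,y), where (y−1)^{|A|+|B|−n−1} is an integer power (zpow, the exponent may be negative). -/
/-!
Write `ε = y - 1`. At `x = 1` only connected spanning subgraphs contribute, `S` with weight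
`ε ^ (|S| + 1 - |V|)`. A subgraph `S₁ ∪ S₂` of `G` is connected iff every component of `S₁`
(in `K`) and of `S₂` (in `H`) meets `U` and the partitions `P(S₁)`, `P(S₂)` they induce on `U`
join to the one-block partition; likewise `S ⊆ E(K)` is connected in `K/A` iff its components
meet `U` and `P(S) ∨ A` has one block. Grouping edge sets by the partition of `U` they induce
gives vectors `u`, `v` with `T(G) = ε^(n+1) uᵀ Aₙ v`, `T(K/A) = ε^(n+1-|A|) (Aₙ u)_A` and
`T(H/B) = ε^(n+1-|B|) (Aₙ v)_B`, and the formula is `uᵀ Aₙ v = (Aₙ u)ᵀ Aₙ⁻¹ (Aₙ v)`.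
`Aₙ = Z D Zᵀ`, where `Z` is the zeta matrix of the partition lattice and `D` the diagonal of
Möbius values `μ(C, ⊤) ≠ 0`, so `Aₙ` is invertible.

All component counts come from one identity: for a partition `s` of `V`, a map `j : R → V` and a
partition `t` of `R`, `|s ⊔ j(t)| + |j⁻¹ s| = |s| + |j⁻¹ s ⊔ t|`.
-/
attribute [local instance] Classical.propDecidable

/-- A multigraph: a finite vertex type, a finite edge index type, and an endpoint
map sending each edge to an unordered pair of vertices. -/
structure Multigraph where
  V : Type
  E : Type
  [finV : Fintype V]
  [finE : Fintype E]
  ends : E → Sym2 V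

attribute [instance] Multigraph.finV Multigraph.finE

namespace Multigraph

/-- Two vertices are related if some edge of `S` has them as its endpoints. -/
def rel (G : Multigraph) (S : Finset G.E) (v w : G.V) : Prop :=
  ∃ e ∈ S, G.ends e = s(v, w)

/-- `ω(S)`: the number of connected components of the spanning subgraph `(V(G), S)`. -/
noncomputable def omega (G : Multigraph) (S : Finset G.E) : ℕ :=
  Nat.card (Quotient (Relation.EqvGen.setoid (G.rel S)))

/-- `ω(G)`: the number of connected components of `G`. -/
noncomputable def omegaG (G : Multigraph) : ℕ :=
  G.omega Finset.univ

/-- The Negami polynomial `f(G;t,x,y)`. -/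
noncomputable def negami (G : Multigraph) (t x y : ℝ) : ℝ :=
  ∑ S : Finset G.E, t ^ G.omega S * x ^ S.card * y ^ (Fintype.card G.E - S.card)

/-- The Tutte polynomial `T(G;x,y)`. -/
noncomputable def tutte (G : Multigraph) (x y : ℝ) : ℝ :=
  ∑ S : Finset G.E,
    (x - 1) ^ (G.omega S - G.omegaG) *
      (y - 1) ^ (G.omega S + S.card - Fintype.card G.V)

end Multigraph

/-- The setoid on `V` extending a setoid `A` on the subset `U`: its nontrivial
classes are exactly the blocks of `A`. -/
def extendSetoid {V : Type} (U : Set V) (A : Setoid U) : Setoid V where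
  r v w := v = w ∨ ∃ (hv : v ∈ U) (hw : w ∈ U), A.r ⟨v, hv⟩ ⟨w, hw⟩
  iseqv := by
    constructor
    · exact fun v => Or.inl rfl
    · rintro v w (rfl | ⟨hv, hw, h⟩)
      · exact Or.inl rfl
      · exact Or.inr ⟨hw, hv, A.symm h⟩
    · rintro v w z (rfl | ⟨hv, hw, h⟩) (rfl | ⟨hw', hz, h'⟩)
      · exact Or.inl rfl
      · exact Or.inr ⟨hw', hz, h'⟩
      · exact Or.inr ⟨hv, hw, h⟩
      · exact Or.inr ⟨hv, hz, A.trans h h'⟩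

namespace Multigraph

/-- The contraction `K/A` of a multigraph `K` by a partition `A` of a subset `U` of
its vertices: all vertices in a common block of `A` are identified. -/
noncomputable def contract (K : Multigraph) {U : Set K.V} (A : Setoid U) : Multigraph where
  V := Quotient (extendSetoid U A)
  E := K.E
  finV := Fintype.ofFinite _
  finE := K.finE
  ends e := (K.ends e).map (Quotient.mk (extendSetoid U A))

/-- `P(S)`: the partition of `U` in which two vertices lie in the same block iff they
lie in the same connected component of the spanning subgraph `(V(K), S)`. -/
def part (K : Multigraph) (U : Set K.V) (S : Finset K.E) : Setoid U :=
  Setoid.comap Subtype.val (Relation.EqvGen.setoid (K.rel S))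

/-- The auxiliary Negami polynomial `f_A(K;t,x,y)`. -/
noncomputable def negamiAux (K : Multigraph) (U : Set K.V) (A : Setoid U) (t x y : ℝ) : ℝ :=
  ∑ S : Finset K.E,
    if K.part U S = A then
      t ^ (K.omega S - Nat.card (Quotient A)) * x ^ S.card *
        y ^ (Fintype.card K.E - S.card)
    else 0

/-- The auxiliary Tutte polynomial `T_A(K;x,y)`. -/
noncomputable def tutteAux (K : Multigraph) (U : Set K.V) (A : Setoid U) (x y : ℝ) : ℝ :=
  ∑ S : Finset K.E,
    if K.part U S = A then
      (x - 1) ^ (K.omega S - Nat.card (Quotient A)) *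
        (y - 1) ^ (K.omega S + S.card - Fintype.card K.V)
    else 0

end Multigraph

/-- The set of partitions of a finite type is finite. -/
instance setoidFinite {α : Type} [Finite α] : Finite (Setoid α) :=
  Finite.of_injective (fun s : Setoid α => s.r) fun a b h => by
    cases a; cases b; simp only at h; subst h; rfl

noncomputable instance setoidFintype {α : Type} [Finite α] : Fintype (Setoid α) :=
  Fintype.ofFinite _

/-- The number of blocks `|A|` of a partition (setoid) `A`. -/
noncomputable def nblocks {α : Type} (A : Setoid α) : ℕ :=
  Nat.card (Quotient A)

/-- The matrix `T_n(t)` indexed by partitions of `α`, with `(A,B)`-entry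
`t^{|A∧B|}` where `A∧B` is the finest common coarsening (the join `A ⊔ B`). -/
noncomputable def Tmat (α : Type) [Finite α] (t : ℝ) :
    Matrix (Setoid α) (Setoid α) ℝ :=
  Matrix.of fun A B => t ^ nblocks (A ⊔ B)

/-- The matrix `L_n(x)` indexed by partitions of `α`, with `(A,B)`-entry
`(x-1)^{|A∧B|-1}` if `|A∧B| + n = |A| + |B|` and `0` otherwise. -/
noncomputable def Lmat (α : Type) [Finite α] (n : ℕ) (x : ℝ) :
    Matrix (Setoid α) (Setoid α) ℝ :=
  Matrix.of fun A B =>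
    if nblocks (A ⊔ B) + n = nblocks A + nblocks B then
      (x - 1) ^ (nblocks (A ⊔ B) - 1)
    else 0

/-- The connectivity matrix `A_n` indexed by partitions of `α`, with `(A,B)`-entry
`1` if `|A∧B| = 1` and `0` otherwise. -/
noncomputable def Amat (α : Type) [Finite α] :
    Matrix (Setoid α) (Setoid α) ℝ :=
  Matrix.of fun A B => if nblocks (A ⊔ B) = 1 then (1 : ℝ) else 0

/-- `G` is an `n`-sum of `K` and `H` along `U`: `V(G) = V(K) ∪ V(H)`,
`V(K) ∩ V(H) = U`, and `E(G)` is the disjoint union of `E(K)` and `E(H)` with the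
inherited endpoint maps. -/
structure NSum (G K H : Multigraph) (U : Set G.V) where
  ιK : K.V → G.V
  ιH : H.V → G.V
  injK : Function.Injective ιK
  injH : Function.Injective ιH
  cover : Set.range ιK ∪ Set.range ιH = Set.univ
  inter : Set.range ιK ∩ Set.range ιH = U
  edgeEquiv : G.E ≃ K.E ⊕ H.E
  endsK : ∀ a, G.ends (edgeEquiv.symm (Sum.inl a)) = (K.ends a).map ιK
  endsH : ∀ a, G.ends (edgeEquiv.symm (Sum.inr a)) = (H.ends a).map ιH

namespace NSum

variable {G K H : Multigraph} {U : Set G.V}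

/-- The copy of a partition `A` of `U` on the corresponding subset of `V(K)`. -/
def pullK (σ : NSum G K H U) (A : Setoid U) : Setoid (σ.ιK ⁻¹' U : Set K.V) :=
  Setoid.comap (fun v => ⟨σ.ιK v.1, v.2⟩) A

/-- The copy of a partition `A` of `U` on the corresponding subset of `V(H)`. -/
def pullH (σ : NSum G K H U) (A : Setoid U) : Setoid (σ.ιH ⁻¹' U : Set H.V) :=
  Setoid.comap (fun v => ⟨σ.ιH v.1, v.2⟩) A

/-- The contraction `K/A` for a partition `A` of the common vertex set `U`. -/
noncomputable def contractK (σ : NSum G K H U) (A : Setoid U) : Multigraph :=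
  K.contract (σ.pullK A)

/-- The contraction `H/B` for a partition `B` of the common vertex set `U`. -/
noncomputable def contractH (σ : NSum G K H U) (B : Setoid U) : Multigraph :=
  H.contract (σ.pullH B)

end NSum


open Relation Finset Polynomial Matrix

section SetoidCard

variable {V R : Type}

lemma nblocks_pos [Finite V] [Nonempty V] (s : Setoid V) : 1 ≤ nblocks s :=
  have : Nonempty (Quotient s) := ⟨Quotient.mk _ (Classical.arbitrary V)⟩
  Nat.card_pos

lemma nblocks_top [Nonempty V] : nblocks (⊤ : Setoid V) = 1 :=
  Nat.card_eq_one_iff_unique.mpr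
    ⟨Quotient.subsingleton_iff.mpr rfl, ⟨Quotient.mk _ (Classical.arbitrary V)⟩⟩

lemma eq_top_of_nblocks_eq_one {s : Setoid V} (h : nblocks s = 1) : s = ⊤ :=
  Quotient.subsingleton_iff.mp (Nat.card_eq_one_iff_unique.mp h).1

lemma nblocks_bot : nblocks (⊥ : Setoid V) = Nat.card V :=
  Nat.card_congr Setoid.quotientBotEquiv

lemma nblocks_le_card [Finite R] (t : Setoid R) : nblocks t ≤ Nat.card R :=
  Nat.card_le_card_of_surjective _ Quotient.mk_surjective

lemma nblocks_comap_le [Finite V] (j : R → V) (s : Setoid V) : nblocks (s.comap j) ≤ nblocks s :=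
  (Nat.card_congr (Setoid.comapQuotientEquiv j s)).trans_le
    (Nat.card_le_card_of_injective _ Subtype.val_injective)

lemma nblocks_comap_of_surjective {j : R → V} (hj : Function.Surjective j) (s : Setoid V) :
    nblocks (s.comap j) = nblocks s := by
  rw [nblocks, Setoid.comap_eq]
  exact Nat.card_congr (Setoid.quotientKerEquivOfSurjective _ (Quotient.mk_surjective.comp hj))

namespace Setoid

lemma comap_bot_of_injective {j : R → V} (hj : Function.Injective j) :
    (⊥ : Setoid V).comap j = ⊥ :=
  Setoid.ext fun _ _ => hj.eq_iff

lemma comap_top (j : R → V) : (⊤ : Setoid V).comap j = ⊤ :=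
  Setoid.eq_top_iff.mpr fun _ _ => trivial

lemma map_eqvGen (r : R → R → Prop) (j : R → V) :
    (EqvGen.setoid r).map j = EqvGen.setoid (Relation.Map r j j) := by
  refine le_antisymm (Setoid.eqvGen_le ?_) (Setoid.eqvGen_mono fun x y ⟨a, b, h, ha, hb⟩ =>
    ⟨a, b, EqvGen.rel _ _ h, ha, hb⟩)
  rintro _ _ ⟨a, b, h, rfl, rfl⟩
  have : EqvGen.setoid r ≤ (EqvGen.setoid (Relation.Map r j j)).comap j :=
    Setoid.eqvGen_le fun a b h => EqvGen.rel _ _ ⟨a, b, h, rfl, rfl⟩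
  exact this h

lemma map_sup_ker (t : Setoid R) (j : R → V) : (t ⊔ Setoid.ker j).map j = t.map j := by
  refine le_antisymm (Setoid.eqvGen_le ?_) (Setoid.eqvGen_mono fun x y ⟨a, b, h, ha, hb⟩ =>
    ⟨a, b, le_sup_left (a := t) h, ha, hb⟩)
  rintro _ _ ⟨a, b, h, rfl, rfl⟩
  have : t ⊔ Setoid.ker j ≤ (t.map j).comap j :=
    sup_le Setoid.le_comap_map fun a b (h : j a = j b) => by
      rw [Setoid.comap_rel, h]
  exact this h

lemma map_rel_iff_of_injective {j : R → V} (hj : Function.Injective j) (t : Setoid R)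
    {x y : V} : t.map j x y ↔ x = y ∨ Relation.Map t j j x y := by
  rw [coe_map_of_ker_le t j fun a b h => hj h ▸ t.refl' a]
  exact or_comm

end Setoid

lemma nblocks_map_of_surjective {j : R → V} (hj : Function.Surjective j) (t : Setoid R) :
    nblocks (t.map j) = nblocks (t ⊔ Setoid.ker j) := by
  rw [← Setoid.map_sup_ker, ← nblocks_comap_of_surjective hj,
    Setoid.comap_map_of_ker_le _ _ le_sup_right]

section SupMap

variable (s : Setoid V) (j : R → V) (t : Setoid R)

private noncomputable def supMapFun (v : V) :
    {x : Quotient s // x ∉ Set.range (Quotient.mk s ∘ j)} ⊕ Quotient (s.comap j ⊔ t) :=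
  if h : ∃ r, s (j r) v then Sum.inr (Quotient.mk _ h.choose)
  else Sum.inl ⟨Quotient.mk s v, fun ⟨r, hr⟩ => h ⟨r, Quotient.exact hr⟩⟩

private lemma supMapFun_of_rel {r : R} {v : V} (h : s (j r) v) :
    supMapFun s j t v = Sum.inr (Quotient.mk _ r) := by
  have hex : ∃ r, s (j r) v := ⟨r, h⟩
  rw [supMapFun, dif_pos hex]
  exact congrArg _ (Quotient.sound (le_sup_left (a := s.comap j) (b := t)
    (s.trans hex.choose_spec (s.symm h))))

private lemma le_ker_supMapFun : s ⊔ t.map j ≤ Setoid.ker (supMapFun s j t) := by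
  refine sup_le (fun a b hab => ?_) (Setoid.eqvGen_le ?_)
  · show supMapFun s j t a = supMapFun s j t b
    by_cases h : ∃ r, s (j r) a
    · obtain ⟨r, hr⟩ := h
      rw [supMapFun_of_rel s j t hr, supMapFun_of_rel s j t (s.trans hr hab)]
    · have h' : ¬ ∃ r, s (j r) b := fun ⟨r, hr⟩ => h ⟨r, s.trans hr (s.symm hab)⟩
      rw [supMapFun, supMapFun, dif_neg h, dif_neg h']
      exact congrArg _ (Subtype.ext (Quotient.sound hab))
  · rintro _ _ ⟨a, b, hab, rfl, rfl⟩
    show supMapFun s j t (j a) = supMapFun s j t (j b)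
    rw [supMapFun_of_rel s j t (s.refl _), supMapFun_of_rel s j t (s.refl _)]
    exact congrArg _ (Quotient.sound (le_sup_right (a := s.comap j) (b := t) hab))

private lemma le_ker_mk_comp : s.comap j ⊔ t ≤ Setoid.ker (Quotient.mk (s ⊔ t.map j) ∘ j) :=
  sup_le (fun _ _ h => Quotient.sound (le_sup_left (a := s) h))
    (fun a b h => Quotient.sound (le_sup_right (a := s) (EqvGen.rel _ _ ⟨a, b, h, rfl, rfl⟩)))

/-- Joining `s` with the image of `t` merges exactly the `s`-classes met by `j`, and merges them
as `s.comap j ⊔ t` does. -/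
noncomputable def quotientSupMapEquiv :
    Quotient (s ⊔ t.map j) ≃
      {x : Quotient s // x ∉ Set.range (Quotient.mk s ∘ j)} ⊕ Quotient (s.comap j ⊔ t) where
  toFun := Quotient.lift (supMapFun s j t) fun _ _ h => le_ker_supMapFun s j t h
  invFun
    | Sum.inl x => Setoid.map_of_le le_sup_left x.1
    | Sum.inr q => Quotient.lift (Quotient.mk _ ∘ j) (fun _ _ h => le_ker_mk_comp s j t h) q
  left_inv := Quotient.ind fun v => by
    by_cases h : ∃ r, s (j r) v
    · obtain ⟨r, hr⟩ := h
      simp only [Quotient.lift_mk, supMapFun_of_rel s j t hr, Function.comp_apply]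
      exact Quotient.sound (le_sup_left (a := s) hr)
    · simp only [Quotient.lift_mk, supMapFun, dif_neg h]
      rfl
  right_inv := by
    rintro (⟨x, hx⟩ | q)
    · induction x using Quotient.ind with | _ v => ?_
      have h : ¬ ∃ r, s (j r) v := fun ⟨r, hr⟩ => hx ⟨r, Quotient.sound hr⟩
      simp only [Setoid.map_of_le, Quotient.map'_mk'', id, Quotient.lift_mk, supMapFun, dif_neg h]
    · induction q using Quotient.ind with | _ r => ?_
      simp only [Quotient.lift_mk, Function.comp_apply, supMapFun_of_rel s j t (s.refl _)]

theorem nblocks_sup_map_add_nblocks_comap [Finite V] [Finite R] :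
    nblocks (s ⊔ t.map j) + nblocks (s.comap j) = nblocks s + nblocks (s.comap j ⊔ t) := by
  have hsplit := Nat.card_congr (quotientSupMapEquiv s j t)
  have hcompl : Nat.card (Set.range (Quotient.mk s ∘ j)) +
      Nat.card {x : Quotient s // x ∉ Set.range (Quotient.mk s ∘ j)} = nblocks s := by
    rw [← Nat.card_sum]; exact Nat.card_congr (Equiv.sumCompl _)
  have hrange : nblocks (s.comap j) = Nat.card (Set.range (Quotient.mk s ∘ j)) :=
    Nat.card_congr (Setoid.comapQuotientEquiv j s)
  rw [Nat.card_sum] at hsplit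
  unfold nblocks at *
  omega

end SupMap

lemma nblocks_map_add_card [Finite V] [Finite R] {j : R → V} (hj : Function.Injective j)
    (t : Setoid R) : nblocks (t.map j) + Nat.card R = Nat.card V + nblocks t := by
  have h := nblocks_sup_map_add_nblocks_comap ⊥ j t
  rwa [bot_sup_eq, Setoid.comap_bot_of_injective hj, bot_sup_eq, nblocks_bot, nblocks_bot] at h

lemma nblocks_le_nblocks_sup_map_top [Finite V] [Finite R] [Nonempty R] (s : Setoid V)
    (j : R → V) : nblocks s + 1 ≤ nblocks (s ⊔ (⊤ : Setoid R).map j) + Nat.card R := by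
  have h := nblocks_sup_map_add_nblocks_comap s j ⊤
  rw [sup_top_eq, nblocks_top] at h
  have := nblocks_le_card (s.comap j)
  omega

end SetoidCard

namespace Multigraph

variable (M : Multigraph)

def conn (S : Finset M.E) : Setoid M.V :=
  EqvGen.setoid (M.rel S)

lemma omega_eq_nblocks (S : Finset M.E) : M.omega S = nblocks (M.conn S) := rfl

lemma one_le_omega [Nonempty M.V] (S : Finset M.E) : 1 ≤ M.omega S :=
  nblocks_pos _

lemma nonempty_of_omegaG_eq_one (h : M.omegaG = 1) : Nonempty M.V := by
  obtain ⟨q⟩ : Nonempty (Quotient (M.conn univ)) :=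
    (Nat.card_pos_iff.mp (show 0 < M.omegaG by omega)).1
  exact ⟨q.out⟩

lemma exists_map_ends_eq_iff {W : Type} (f : M.V → W) (S : Finset M.E) (x y : W) :
    (∃ e ∈ S, (M.ends e).map f = s(x, y)) ↔ Relation.Map (M.rel S) f f x y := by
  constructor
  · rintro ⟨e, he, h⟩
    obtain ⟨⟨a, b⟩, hab⟩ := Quot.exists_rep (M.ends e)
    rw [← hab, Sym2.map_mk, Sym2.eq_iff] at h
    rcases h with ⟨rfl, rfl⟩ | ⟨rfl, rfl⟩
    · exact ⟨a, b, ⟨e, he, hab.symm⟩, rfl, rfl⟩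
    · exact ⟨b, a, ⟨e, he, hab.symm.trans Sym2.eq_swap⟩, rfl, rfl⟩
  · rintro ⟨a, b, ⟨e, he, h⟩, rfl, rfl⟩
    exact ⟨e, he, by rw [h, Sym2.map_mk]⟩

lemma conn_empty : M.conn ∅ = ⊥ :=
  le_bot_iff.mp (Setoid.eqvGen_le fun _ _ ⟨e, he, _⟩ => absurd he (notMem_empty e))

lemma conn_insert {e : M.E} {a b : M.V} (hab : M.ends e = s(a, b)) (S : Finset M.E) :
    M.conn (insert e S) = M.conn S ⊔ (⊤ : Setoid (Fin 2)).map ![a, b] := by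
  apply le_antisymm
  · refine Setoid.eqvGen_le ?_
    rintro x y ⟨e', he', h⟩
    rcases mem_insert.mp he' with rfl | he'
    · refine le_sup_right (a := M.conn S) ?_
      rw [hab, Sym2.eq_iff] at h
      rcases h with ⟨rfl, rfl⟩ | ⟨rfl, rfl⟩
      · exact EqvGen.rel _ _ ⟨0, 1, trivial, rfl, rfl⟩
      · exact EqvGen.rel _ _ ⟨1, 0, trivial, rfl, rfl⟩
    · exact le_sup_left (a := M.conn S) (EqvGen.rel _ _ ⟨e', he', h⟩)
  · refine sup_le (Setoid.eqvGen_mono fun x y ⟨e', he', h⟩ => ⟨e', mem_insert_of_mem he', h⟩)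
      (Setoid.eqvGen_le ?_)
    rintro _ _ ⟨i, k, -, rfl, rfl⟩
    have hlink : M.conn (insert e S) a b := EqvGen.rel _ _ ⟨e, mem_insert_self e S, hab⟩
    fin_cases i <;> fin_cases k
    · exact Setoid.refl' _ a
    · exact hlink
    · exact Setoid.symm' _ hlink
    · exact Setoid.refl' _ b

lemma card_V_le_omega_add_card (S : Finset M.E) : Fintype.card M.V ≤ M.omega S + S.card := by
  induction S using Finset.induction_on with
  | empty =>
    rw [omega_eq_nblocks, conn_empty, nblocks_bot, Nat.card_eq_fintype_card]
    exact Nat.le_add_right _ _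
  | insert e S he ih =>
    obtain ⟨⟨a, b⟩, hab⟩ := Quot.exists_rep (M.ends e)
    have h := nblocks_le_nblocks_sup_map_top (M.conn S) ![a, b]
    rw [← M.conn_insert hab.symm, Nat.card_eq_fintype_card, Fintype.card_fin] at h
    rw [card_insert_of_notMem he, omega_eq_nblocks]
    rw [omega_eq_nblocks] at ih
    omega

theorem tutte_one_eq_sum (hM : M.omegaG = 1) (y : ℝ) :
    M.tutte 1 y = ∑ S : Finset M.E,
      if M.omega S = 1 then (y - 1) ^ ((S.card : ℤ) + 1 - Fintype.card M.V) else 0 := by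
  have := M.nonempty_of_omegaG_eq_one hM
  refine sum_congr rfl fun S _ => ?_
  have h1 := M.one_le_omega S
  have h2 := M.card_V_le_omega_add_card S
  rw [hM, sub_self, zero_pow_eq]
  by_cases h : M.omega S = 1
  · rw [if_pos (by omega), if_pos h, one_mul, h, ← zpow_natCast]
    congr 1
    omega
  · rw [if_neg (by omega), if_neg h, zero_mul]

variable {U : Set M.V} (A : Setoid U)

lemma conn_contract (S : Finset M.E) :
    (M.contract A).conn S = (M.conn S).map (Quotient.mk _) := by
  unfold conn
  rw [Setoid.map_eqvGen]
  congr
  funext x y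
  exact propext (M.exists_map_ends_eq_iff _ S x y)

lemma omega_contract (S : Finset M.E) :
    (M.contract A).omega S = nblocks (M.conn S ⊔ extendSetoid U A) :=
  (congrArg nblocks (M.conn_contract A S)).trans <|
    (nblocks_map_of_surjective Quotient.mk_surjective _).trans <|
      congrArg (fun r => nblocks (M.conn S ⊔ r)) (Setoid.ker_mk_eq _)

lemma card_V_contract : Fintype.card (M.contract A).V = nblocks (extendSetoid U A) :=
  Nat.card_eq_fintype_card.symm

end Multigraph

namespace NSum

variable {G K H : Multigraph} {U : Set G.V} (σ : NSum G K H U)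

def symm : NSum G H K U where
  ιK := σ.ιH
  ιH := σ.ιK
  injK := σ.injH
  injH := σ.injK
  cover := by rw [Set.union_comm]; exact σ.cover
  inter := by rw [Set.inter_comm]; exact σ.inter
  edgeEquiv := σ.edgeEquiv.trans (Equiv.sumComm _ _)
  endsK := σ.endsH
  endsH := σ.endsK

lemma contractH_eq_symm_contractK (B : Setoid U) : σ.contractH B = σ.symm.contractK B := rfl

lemma mem_range_ιK (u : U) : u.1 ∈ Set.range σ.ιK :=
  (σ.inter.ge u.2).1

lemma ιK_mem_of_eq_ιH {a : K.V} {c : H.V} (h : σ.ιH c = σ.ιK a) : σ.ιK a ∈ U :=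
  σ.inter.le ⟨⟨a, rfl⟩, c, h⟩

noncomputable def toK (u : U) : K.V :=
  (σ.mem_range_ιK u).choose

lemma ιK_toK (u : U) : σ.ιK (σ.toK u) = u :=
  (σ.mem_range_ιK u).choose_spec

lemma toK_eq_iff {u : U} {a : K.V} : σ.toK u = a ↔ σ.ιK a = u :=
  ⟨fun h => h ▸ σ.ιK_toK u, fun h => σ.injK (by rw [σ.ιK_toK, h])⟩

lemma toK_injective : Function.Injective σ.toK := fun u v h =>
  Subtype.ext (by rw [← σ.ιK_toK u, h, σ.ιK_toK])

noncomputable def partK (S : Finset K.E) : Setoid U :=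
  (K.conn S).comap σ.toK

lemma extendSetoid_pullK (A : Setoid U) : extendSetoid _ (σ.pullK A) = A.map σ.toK := by
  have hval : ∀ (u : U) (h : σ.ιK (σ.toK u) ∈ U), (⟨σ.ιK (σ.toK u), h⟩ : U) = u :=
    fun u _ => Subtype.ext (σ.ιK_toK u)
  refine Setoid.ext fun a b => ?_
  rw [Setoid.map_rel_iff_of_injective σ.toK_injective]
  constructor
  · rintro (rfl | ⟨ha, hb, h⟩)
    · exact Or.inl rfl
    · exact Or.inr ⟨⟨_, ha⟩, ⟨_, hb⟩, h, σ.toK_eq_iff.mpr rfl, σ.toK_eq_iff.mpr rfl⟩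
  · rintro (rfl | ⟨u, v, h, rfl, rfl⟩)
    · exact Or.inl rfl
    · refine Or.inr ⟨by rw [Set.mem_preimage, σ.ιK_toK]; exact u.2,
        by rw [Set.mem_preimage, σ.ιK_toK]; exact v.2, ?_⟩
      show A ⟨_, _⟩ ⟨_, _⟩
      rwa [hval, hval]

lemma card_V_contractK (A : Setoid U) :
    Fintype.card (σ.contractK A).V + Nat.card U = Fintype.card K.V + nblocks A := by
  rw [contractK, Multigraph.card_V_contract, extendSetoid_pullK,
    nblocks_map_add_card σ.toK_injective, Nat.card_eq_fintype_card]

lemma omega_contractK_eq (A : Setoid U) (S : Finset K.E) :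
    (σ.contractK A).omega S = nblocks (K.conn S ⊔ A.map σ.toK) :=
  (K.omega_contract _ S).trans (by rw [extendSetoid_pullK])

lemma omega_contractK (A : Setoid U) (S : Finset K.E) :
    (σ.contractK A).omega S + nblocks (σ.partK S) = K.omega S + nblocks (σ.partK S ⊔ A) := by
  rw [omega_contractK_eq]
  exact nblocks_sup_map_add_nblocks_comap _ _ _

lemma card_V_add_card (σ : NSum G K H U) :
    Fintype.card G.V + Nat.card U = Fintype.card K.V + Fintype.card H.V := by
  have h := Set.ncard_union_add_ncard_inter (Set.range σ.ιK) (Set.range σ.ιH)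
  rw [σ.cover, σ.inter, Set.ncard_univ, ← Nat.card_coe_set_eq U,
    ← Nat.card_coe_set_eq (Set.range σ.ιK), ← Nat.card_coe_set_eq (Set.range σ.ιH),
    Nat.card_range_of_injective σ.injK, Nat.card_range_of_injective σ.injH] at h
  simpa only [Nat.card_eq_fintype_card] using h

def edgeFinsetEquiv : Finset K.E × Finset H.E ≃ Finset G.E :=
  Finset.sumEquiv.toEquiv.symm.trans σ.edgeEquiv.symm.finsetCongr

lemma card_edgeFinsetEquiv (S₁ : Finset K.E) (S₂ : Finset H.E) :
    (σ.edgeFinsetEquiv (S₁, S₂)).card = S₁.card + S₂.card := by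
  simp [edgeFinsetEquiv]

lemma edgeFinsetEquiv_univ : σ.edgeFinsetEquiv (univ, univ) = univ := by
  simp [edgeFinsetEquiv]

lemma conn_edgeFinsetEquiv (S₁ : Finset K.E) (S₂ : Finset H.E) :
    G.conn (σ.edgeFinsetEquiv (S₁, S₂)) = (K.conn S₁).map σ.ιK ⊔ (H.conn S₂).map σ.ιH := by
  have hrel : G.rel (σ.edgeFinsetEquiv (S₁, S₂)) =
      Relation.Map (K.rel S₁) σ.ιK σ.ιK ⊔ Relation.Map (H.rel S₂) σ.ιH σ.ιH := by
    funext x y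
    simp only [Pi.sup_apply, sup_Prop_eq, ← Multigraph.exists_map_ends_eq_iff, ← σ.endsK,
      ← σ.endsH]
    simp [Multigraph.rel, edgeFinsetEquiv, σ.edgeEquiv.exists_congr_left, Sum.exists]
  rw [Multigraph.conn, hrel, Setoid.gi.gc.l_sup, ← Setoid.map_eqvGen, ← Setoid.map_eqvGen]
  rfl

lemma comap_ιK_map_ιH (S : Finset H.E) :
    ((H.conn S).map σ.ιH).comap σ.ιK = (σ.symm.partK S).map σ.toK := by
  refine Setoid.ext fun a b => ?_
  rw [Setoid.comap_rel, Setoid.map_rel_iff_of_injective σ.injH,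
    Setoid.map_rel_iff_of_injective σ.toK_injective]
  constructor
  · rintro (h | ⟨c, d, h, hc, hd⟩)
    · exact Or.inl (σ.injK h)
    · have ha := σ.ιK_mem_of_eq_ιH hc
      have hb := σ.ιK_mem_of_eq_ιH hd
      refine Or.inr ⟨⟨_, ha⟩, ⟨_, hb⟩, ?_, σ.toK_eq_iff.mpr rfl, σ.toK_eq_iff.mpr rfl⟩
      show H.conn S (σ.symm.toK _) (σ.symm.toK _)
      rwa [(σ.symm.toK_eq_iff (u := ⟨_, ha⟩)).mpr hc, (σ.symm.toK_eq_iff (u := ⟨_, hb⟩)).mpr hd]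
  · rintro (rfl | ⟨u, v, h, rfl, rfl⟩)
    · exact Or.inl rfl
    · exact Or.inr ⟨_, _, h, (σ.symm.ιK_toK u).trans (σ.ιK_toK u).symm,
        (σ.symm.ιK_toK v).trans (σ.ιK_toK v).symm⟩

/-- The components of `(V(G), S₁ ∪ S₂)` are those of `K / P_H(S₂)` with edges `S₁`, together
with the components of `(V(H), S₂)` that avoid `U`. -/
lemma omega_edgeFinsetEquiv_add (S₁ : Finset K.E) (S₂ : Finset H.E) :
    G.omega (σ.edgeFinsetEquiv (S₁, S₂)) + nblocks (σ.symm.partK S₂) =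
      (σ.contractK (σ.symm.partK S₂)).omega S₁ + H.omega S₂ := by
  have hglue := nblocks_sup_map_add_nblocks_comap ((H.conn S₂).map σ.ιH) σ.ιK (K.conn S₁)
  rw [sup_comm, ← conn_edgeFinsetEquiv, comap_ιK_map_ιH, sup_comm, ← omega_contractK_eq,
    ← Multigraph.omega_eq_nblocks] at hglue
  have hK := nblocks_map_add_card σ.toK_injective (σ.symm.partK S₂)
  have hH := nblocks_map_add_card σ.injH (H.conn S₂)
  have hV := σ.card_V_add_card
  rw [Nat.card_eq_fintype_card (α := K.V)] at hK
  rw [Nat.card_eq_fintype_card (α := H.V), Nat.card_eq_fintype_card (α := G.V)] at hH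
  rw [← Multigraph.omega_eq_nblocks] at hH
  omega

lemma partK_univ (hK : K.omegaG = 1) : σ.partK univ = ⊤ := by
  have hconn : K.conn univ = ⊤ := eq_top_of_nblocks_eq_one hK
  rw [partK, hconn, Setoid.comap_top]

lemma omegaG_contractK [Nonempty U] (hK : K.omegaG = 1) (A : Setoid U) :
    (σ.contractK A).omegaG = 1 := by
  have h := σ.omega_contractK A univ
  rw [σ.partK_univ hK, top_sup_eq, nblocks_top] at h
  exact Nat.add_right_cancel (h.trans (congrArg (· + 1) hK))

lemma omegaG_eq_one (σ : NSum G K H U) [Nonempty U] (hK : K.omegaG = 1) (hH : H.omegaG = 1) :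
    G.omegaG = 1 := by
  have h := σ.omega_edgeFinsetEquiv_add univ univ
  rw [σ.edgeFinsetEquiv_univ, σ.symm.partK_univ hH, nblocks_top] at h
  have hcon : (σ.contractK ⊤).omegaG = 1 := σ.omegaG_contractK hK ⊤
  have hH' : H.omega univ = 1 := hH
  rw [hH'] at h
  exact Nat.add_right_cancel (h.trans (congrArg (· + 1) hcon))

end NSum

section PartitionLattice

/-- `μ(C, ⊤)` in the lattice of partitions, for a partition `C` with `k` blocks. -/
noncomputable def partitionMobius (k : ℕ) : ℝ :=
  (-1) ^ (k - 1) * (k - 1).factorial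

lemma partitionMobius_ne_zero (k : ℕ) : partitionMobius k ≠ 0 :=
  mul_ne_zero (pow_ne_zero _ (by norm_num)) (by exact_mod_cast (k - 1).factorial_ne_zero)

def kerEqEquivEmbedding {β γ : Type} (C : Setoid β) :
    {f : β → γ // Setoid.ker f = C} ≃ (Quotient C ↪ γ) where
  toFun f := ⟨Quotient.lift f.1 fun _ _ h => f.2.ge h, Quotient.ind₂ fun _ _ h =>
    Quotient.sound (f.2.le h)⟩
  invFun g := ⟨g ∘ Quotient.mk C, Setoid.ext fun _ _ =>
    g.injective.eq_iff.trans ⟨Quotient.exact, Quotient.sound⟩⟩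
  left_inv _ := rfl
  right_inv _ := DFunLike.ext _ _ (Quotient.ind fun _ => rfl)

lemma card_fun_eq_sum_descFactorial (β : Type) [Fintype β] (q : ℕ) :
    q ^ Fintype.card β = ∑ C : Setoid β, q.descFactorial (nblocks C) := by
  calc q ^ Fintype.card β = Nat.card (β → Fin q) := by simp
    _ = ∑ C : Setoid β, Nat.card {f : β → Fin q // Setoid.ker f = C} := by
      rw [← Nat.card_sigma, Nat.card_congr (Equiv.sigmaFiberEquiv _)]
    _ = _ := sum_congr rfl fun C _ => by
      let _ : Fintype (Quotient C) := Fintype.ofFinite _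
      rw [Nat.card_congr (kerEqEquivEmbedding C), Nat.card_eq_fintype_card,
        Fintype.card_embedding_eq, Fintype.card_fin, nblocks, Nat.card_eq_fintype_card]

lemma X_pow_card_eq_sum_descPochhammer (β : Type) [Fintype β] :
    (X : ℝ[X]) ^ Fintype.card β = ∑ C : Setoid β, descPochhammer ℝ (nblocks C) := by
  refine eq_of_infinite_eval_eq _ _
    (Set.infinite_of_injective_forall_mem Nat.cast_injective fun q : ℕ => ?_)
  simp only [Set.mem_ofPred_eq, eval_pow, eval_X, eval_finsetSum,
    descPochhammer_eval_eq_descFactorial]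
  exact_mod_cast card_fun_eq_sum_descFactorial β q

lemma coeff_one_descPochhammer {k : ℕ} (hk : 1 ≤ k) :
    (descPochhammer ℝ k).coeff 1 = partitionMobius k := by
  obtain ⟨k, rfl⟩ := Nat.exists_eq_add_of_le' hk
  have h := ascPochhammer_eval_neg_eq_descPochhammer ℝ (-1) k
  rw [neg_neg, ascPochhammer_eval_one] at h
  rw [descPochhammer_succ_left, coeff_X_mul, coeff_zero_eq_eval_zero, eval_comp, eval_sub, eval_X,
    eval_one, zero_sub, partitionMobius, Nat.add_sub_cancel, h, ← mul_assoc, ← mul_pow,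
    neg_one_mul, neg_neg, one_pow, one_mul]

/-- The coefficient of `q` in `q ^ |β| = ∑_C q (q - 1) ⋯ (q - |C| + 1)`. -/
lemma sum_partitionMobius (β : Type) [Fintype β] [Nonempty β] :
    ∑ C : Setoid β, partitionMobius (nblocks C) = if Fintype.card β = 1 then 1 else 0 := by
  calc ∑ C : Setoid β, partitionMobius (nblocks C)
      = ∑ C : Setoid β, (descPochhammer ℝ (nblocks C)).coeff 1 :=
        sum_congr rfl fun C _ => (coeff_one_descPochhammer (nblocks_pos C)).symm
    _ = ((X : ℝ[X]) ^ Fintype.card β).coeff 1 := by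
        rw [X_pow_card_eq_sum_descPochhammer, finsetSum_coeff]
    _ = _ := by rw [coeff_X_pow]; exact if_congr eq_comm rfl rfl

lemma sum_partitionMobius_of_le {α : Type} [Finite α] [Nonempty α] (D : Setoid α) :
    ∑ C : Setoid α, (if D ≤ C then partitionMobius (nblocks C) else 0) =
      if nblocks D = 1 then 1 else 0 := by
  let _ : Fintype (Quotient D) := Fintype.ofFinite _
  have : Nonempty (Quotient D) := ⟨Quotient.mk _ (Classical.arbitrary α)⟩
  rw [← sum_filter,
    sum_subtype (p := (D ≤ ·)) _ (fun C => by simp) (fun C => partitionMobius (nblocks C)),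
    ← (Setoid.correspondence D).symm.toEquiv.sum_comp, nblocks, Nat.card_eq_fintype_card,
    ← sum_partitionMobius (Quotient D)]
  exact sum_congr rfl fun C _ => congrArg partitionMobius
    (nblocks_comap_of_surjective Quotient.mk_surjective C)

end PartitionLattice

section ConnectivityMatrix

variable (α : Type) [Finite α]

noncomputable def zetaMatrix : Matrix (Setoid α) (Setoid α) ℝ :=
  Matrix.of fun A C => if A ≤ C then 1 else 0

lemma Amat_apply (A B : Setoid α) : Amat α A B = if nblocks (A ⊔ B) = 1 then 1 else 0 := rfl

lemma Amat_eq_zetaMatrix_mul [Nonempty α] :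
    Amat α = zetaMatrix α * diagonal (fun C => partitionMobius (nblocks C)) * (zetaMatrix α)ᵀ := by
  ext A B
  rw [mul_apply]
  simp only [mul_diagonal, transpose_apply, zetaMatrix, of_apply]
  rw [Amat, of_apply, ← sum_partitionMobius_of_le (A ⊔ B)]
  refine sum_congr rfl fun C _ => ?_
  by_cases hA : A ≤ C <;> by_cases hB : B ≤ C <;> simp [hA, hB]

lemma det_zetaMatrix : (zetaMatrix α).det = 1 := by
  have : Fintype (LinearExtension (Setoid α)) := (inferInstance : Fintype (Setoid α))
  let e : Setoid α ≃ LinearExtension (Setoid α) := Equiv.refl _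
  rw [← det_submatrix_equiv_self e.symm, det_of_isUpperTriangular]
  · exact prod_eq_one fun C _ => if_pos le_rfl
  · intro i j hji
    exact if_neg fun hle => ((toLinearExtension (α := Setoid α)).monotone hle).not_gt hji

lemma isUnit_Amat [Nonempty α] : IsUnit (Amat α) := by
  rw [isUnit_iff_isUnit_det, Amat_eq_zetaMatrix_mul, det_mul, det_mul, det_transpose,
    det_zetaMatrix, det_diagonal, one_mul, mul_one]
  exact isUnit_iff_ne_zero.mpr (prod_ne_zero_iff.mpr fun C _ => partitionMobius_ne_zero _)

lemma Amat_transpose : (Amat α)ᵀ = Amat α := by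
  ext A B
  simp only [transpose_apply, Amat, of_apply, sup_comm]

end ConnectivityMatrix

lemma Matrix.sum_inv_mul_mulVec_mul_mulVec {ι 𝕜 : Type} [Fintype ι] [DecidableEq ι] [CommRing 𝕜]
    {M : Matrix ι ι 𝕜} (hM : IsUnit M) (hMt : Mᵀ = M) (u v : ι → 𝕜) :
    ∑ i, ∑ j, M⁻¹ i j * (M *ᵥ u) i * (M *ᵥ v) j = ∑ i, ∑ j, M i j * u i * v j := by
  have hdot : ∀ (N : Matrix ι ι 𝕜) (x z : ι → 𝕜), ∑ i, ∑ j, N i j * x i * z j = x ⬝ᵥ (N *ᵥ z) :=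
    fun N x z => sum_congr rfl fun i _ => by
      simp only [mulVec, dotProduct, mul_sum]
      exact sum_congr rfl fun j _ => by ring
  rw [hdot, hdot, mulVec_mulVec, nonsing_inv_mul _ ((isUnit_iff_isUnit_det M).mp hM), one_mulVec,
    dotProduct_mulVec u, ← vecMul_transpose, hMt]

section Fiberwise

variable {ι₁ ι₂ κ₁ κ₂ : Type} [Fintype ι₁] [Fintype ι₂] [Fintype κ₁] [Fintype κ₂]

lemma sum_mul_sum_filter_eq (g : ι₁ → κ₁) (F : κ₁ → ℝ) (w : ι₁ → ℝ) :
    ∑ j, F j * ∑ i with g i = j, w i = ∑ i, F (g i) * w i := by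
  rw [← sum_fiberwise univ g (fun i => F (g i) * w i)]
  refine sum_congr rfl fun j _ => ?_
  rw [mul_sum]
  exact sum_congr rfl fun i hi => by rw [(mem_filter.mp hi).2]

lemma sum_sum_mul_sum_filter_eq (g₁ : ι₁ → κ₁) (g₂ : ι₂ → κ₂) (F : κ₁ → κ₂ → ℝ)
    (w₁ : ι₁ → ℝ) (w₂ : ι₂ → ℝ) :
    ∑ j₁, ∑ j₂, F j₁ j₂ * (∑ i with g₁ i = j₁, w₁ i) * (∑ i with g₂ i = j₂, w₂ i) =
      ∑ i₁, ∑ i₂, F (g₁ i₁) (g₂ i₂) * w₁ i₁ * w₂ i₂ := by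
  calc _ = ∑ j₁, (∑ i₂, F j₁ (g₂ i₂) * w₂ i₂) * ∑ i with g₁ i = j₁, w₁ i :=
        sum_congr rfl fun j₁ _ => by
          rw [← sum_mul_sum_filter_eq g₂ (F j₁) w₂, sum_mul]
          exact sum_congr rfl fun j₂ _ => by ring
    _ = ∑ i₁, (∑ i₂, F (g₁ i₁) (g₂ i₂) * w₂ i₂) * w₁ i₁ :=
        sum_mul_sum_filter_eq g₁ (fun j₁ => ∑ i₂, F j₁ (g₂ i₂) * w₂ i₂) w₁
    _ = _ := sum_congr rfl fun i₁ _ => by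
        rw [sum_mul]
        exact sum_congr rfl fun i₂ _ => by ring

end Fiberwise

namespace NSum

open Multigraph

variable {G K H : Multigraph} {U : Set G.V} (σ : NSum G K H U) (y : ℝ)

/-- Vanishes unless every component of `(V(K), S)` meets `U`. -/
noncomputable def anchoredWeight (S : Finset K.E) : ℝ :=
  if K.omega S = nblocks (σ.partK S) then (y - 1) ^ ((S.card : ℤ) - Fintype.card K.V) else 0

noncomputable def anchoredSum (C : Setoid U) : ℝ :=
  ∑ S with σ.partK S = C, σ.anchoredWeight y S

variable {y}

lemma tutte_one_term_contractK [Nonempty U] (hy : y ≠ 1) (A : Setoid U) (S : Finset K.E) :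
    (if (σ.contractK A).omega S = 1 then
        (y - 1) ^ ((S.card : ℤ) + 1 - Fintype.card (σ.contractK A).V) else 0) =
      (y - 1) ^ ((Nat.card U : ℤ) + 1 - nblocks A) *
        (Amat U A (σ.partK S) * σ.anchoredWeight y S) := by
  have hω := σ.omega_contractK A S
  have hV := σ.card_V_contractK A
  have : Nonempty (σ.contractK A).V := ⟨Quotient.mk _ (σ.toK (Classical.arbitrary U))⟩
  have h1 := (σ.contractK A).one_le_omega S
  have h2 : nblocks (σ.partK S) ≤ K.omega S := nblocks_comap_le _ _
  have h3 := nblocks_pos (σ.partK S ⊔ A)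
  rw [Amat_apply, anchoredWeight, sup_comm]
  by_cases hc : (σ.contractK A).omega S = 1
  · rw [if_pos hc, if_pos (show nblocks (σ.partK S ⊔ A) = 1 by omega),
      if_pos (show K.omega S = nblocks (σ.partK S) by omega), one_mul,
      ← zpow_add₀ (sub_ne_zero.mpr hy)]
    congr 1
    omega
  · rw [if_neg hc]
    split_ifs <;> first | omega | simp

theorem tutte_one_contractK [Nonempty U] (hK : K.omegaG = 1) (hy : y ≠ 1) (A : Setoid U) :
    (σ.contractK A).tutte 1 y =
      (y - 1) ^ ((Nat.card U : ℤ) + 1 - nblocks A) * (Amat U *ᵥ σ.anchoredSum y) A := by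
  rw [tutte_one_eq_sum _ (σ.omegaG_contractK hK A), mulVec, dotProduct]
  unfold anchoredSum
  rw [sum_mul_sum_filter_eq, mul_sum]
  exact sum_congr rfl fun S _ => σ.tutte_one_term_contractK hy A S

lemma tutte_one_term_eq [Nonempty U] (hy : y ≠ 1) (S₁ : Finset K.E) (S₂ : Finset H.E) :
    (if G.omega (σ.edgeFinsetEquiv (S₁, S₂)) = 1 then
        (y - 1) ^ (((σ.edgeFinsetEquiv (S₁, S₂)).card : ℤ) + 1 - Fintype.card G.V) else 0) =
      (y - 1) ^ ((Nat.card U : ℤ) + 1) * (Amat U (σ.partK S₁) (σ.symm.partK S₂) *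
        σ.anchoredWeight y S₁ * σ.symm.anchoredWeight y S₂) := by
  have hglue := σ.omega_edgeFinsetEquiv_add S₁ S₂
  have hω := σ.omega_contractK (σ.symm.partK S₂) S₁
  have hV := σ.card_V_add_card
  have hE := σ.card_edgeFinsetEquiv S₁ S₂
  have : Nonempty G.V := ⟨(Classical.arbitrary U).1⟩
  have h1 := G.one_le_omega (σ.edgeFinsetEquiv (S₁, S₂))
  have h2 : nblocks (σ.partK S₁) ≤ K.omega S₁ := nblocks_comap_le _ _
  have h3 : nblocks (σ.symm.partK S₂) ≤ H.omega S₂ := nblocks_comap_le _ _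
  have h4 := nblocks_pos (σ.partK S₁ ⊔ σ.symm.partK S₂)
  rw [Amat_apply, anchoredWeight, anchoredWeight]
  by_cases hc : G.omega (σ.edgeFinsetEquiv (S₁, S₂)) = 1
  · rw [if_pos hc, if_pos (show nblocks (σ.partK S₁ ⊔ σ.symm.partK S₂) = 1 by omega),
      if_pos (show K.omega S₁ = nblocks (σ.partK S₁) by omega),
      if_pos (show H.omega S₂ = nblocks (σ.symm.partK S₂) by omega), one_mul,
      ← zpow_add₀ (sub_ne_zero.mpr hy), ← zpow_add₀ (sub_ne_zero.mpr hy)]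
    congr 1
    omega
  · rw [if_neg hc]
    split_ifs <;> first | omega | simp

theorem tutte_one_eq [Nonempty U] (hK : K.omegaG = 1) (hH : H.omegaG = 1) (hy : y ≠ 1) :
    G.tutte 1 y = (y - 1) ^ ((Nat.card U : ℤ) + 1) *
      ∑ C, ∑ D, Amat U C D * σ.anchoredSum y C * σ.symm.anchoredSum y D := by
  rw [tutte_one_eq_sum _ (σ.omegaG_eq_one hK hH), ← σ.edgeFinsetEquiv.sum_comp,
    Fintype.sum_prod_type]
  unfold anchoredSum
  rw [sum_sum_mul_sum_filter_eq _ _ (Amat U), mul_sum]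
  exact sum_congr rfl fun S₁ _ => by
    rw [mul_sum]
    exact sum_congr rfl fun S₂ _ => σ.tutte_one_term_eq hy S₁ S₂

end NSum

/-- the splitting formula for `T(G;1,y)`, `y ≠ 1`, of an `n`-sum of
connected multigraphs, with coefficients from the inverse connectivity matrix. -/
theorem tutte_splitting_formula_x_eq_one
    (G K H : Multigraph) (U : Set G.V) (n : ℕ) (hn : 1 ≤ n)
    (sg : NSum G K H U) (hU : Nat.card ↥U = n)
    (hK : K.omegaG = 1) (hH : H.omegaG = 1) (y : ℝ) (hy : y ≠ 1) :
    IsUnit (Amat ↥U) ∧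
    G.tutte 1 y =
      ∑ A : Setoid ↥U, ∑ B : Setoid ↥U,
        (Amat ↥U)⁻¹ A B * (y - 1) ^ ((nblocks A : ℤ) + (nblocks B : ℤ) - (n : ℤ) - 1) *
          (sg.contractK A).tutte 1 y * (sg.contractH B).tutte 1 y := by
  have : Nonempty U := (Nat.card_pos_iff.mp (show 0 < Nat.card U by omega)).1
  refine ⟨isUnit_Amat U, ?_⟩
  rw [sg.tutte_one_eq hK hH hy,
    ← sum_inv_mul_mulVec_mul_mulVec (isUnit_Amat U) (Amat_transpose U), mul_sum]
  refine sum_congr rfl fun A _ => ?_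
  rw [mul_sum]
  refine sum_congr rfl fun B _ => ?_
  rw [sg.tutte_one_contractK hK hy, sg.contractH_eq_symm_contractK,
    sg.symm.tutte_one_contractK hH hy, hU]
  have hε : y - 1 ≠ 0 := sub_ne_zero.mpr hy
  have hexp : (y - 1) ^ ((nblocks A : ℤ) + nblocks B - n - 1) *
      (y - 1) ^ ((n : ℤ) + 1 - nblocks A) * (y - 1) ^ ((n : ℤ) + 1 - nblocks B) =
        (y - 1) ^ ((n : ℤ) + 1) := by
    rw [← zpow_add₀ hε, ← zpow_add₀ hε]
    ring_nf
  rw [← hexp]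
  ring
end

section
/- Let K be a multigraph with a distinguished n-element subset U of its vertices (n ≥ 1), let A ∈ Γ(U), and let t, x, y be real numbers. Then f(K/A;t,x,y) = Σ_{B ∈ Γ(U)} t^{|A∧B|} · f_B(K;t,x,y). -/
/-!
For an edge set `S`, the components of `(K/A, S)` are the classes of the join of the block
relation of `A` with the component relation `E_S` of `(V(K), S)`. Components of `E_S` that
avoid `U` survive this join unchanged, while those meeting `U` are merged exactly as
`A ∧ P(S)` merges the points of `U`. Hence `ω_{K/A}(S) = |A ∧ P(S)| + ω(S) - |P(S)|`, and
grouping the subsets `S` according to `P(S)` gives the expansion.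
-/

attribute [local instance] Classical.propDecidable

theorem nblocks_comap {α β : Type} (f : α → β) (r : Setoid β) :
    nblocks (r.comap f) = (Set.range (Quotient.mk r ∘ f)).ncard := by
  rw [nblocks, Nat.card_congr (Setoid.comapQuotientEquiv f r), Nat.card_coe_set_eq]

theorem nblocks_comap_le_s13 {α β : Type} [Finite β] (f : α → β) (r : Setoid β) :
    nblocks (r.comap f) ≤ nblocks r := by
  rw [nblocks_comap]
  exact Set.ncard_le_card _

theorem nblocks_comap_of_surjective_s13 {α β : Type} {f : α → β} (hf : f.Surjective)
    (r : Setoid β) : nblocks (r.comap f) = nblocks r := by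
  rw [nblocks_comap, (Quotient.mk_surjective.comp hf).range_eq, Set.ncard_univ]
  rfl

section ExtendSetoidSup

variable {V : Type} {U : Set V} (A : Setoid U) (E : Setoid V)

/-- Explicit description of `extendSetoid U A ⊔ E`: the `E`-classes meeting `U` are glued
according to `A ⊔ E.comap ((↑) : U → V)`, the others are left alone. -/
def gluedSetoid : Setoid V where
  r v w := E v w ∨ ∃ u u' : U, E v u ∧ E w u' ∧ (A ⊔ E.comap ((↑) : U → V)) u u'
  iseqv := by
    constructor
    · exact fun v => Or.inl (E.refl' v)
    · rintro v w (h | ⟨u, u', hv, hw, hu⟩)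
      · exact Or.inl (E.symm' h)
      · exact Or.inr ⟨u', u, hw, hv, Setoid.symm' _ hu⟩
    · rintro v w z (h | ⟨u, u', hv, hw, hu⟩) (h' | ⟨p, p', hw', hz, hp⟩)
      · exact Or.inl (E.trans' h h')
      · exact Or.inr ⟨p, p', E.trans' h hw', hz, hp⟩
      · exact Or.inr ⟨u, u', hv, E.trans' (E.symm' h') hw, hu⟩
      · have hup : (A ⊔ E.comap ((↑) : U → V)) u' p :=
          (le_sup_right : E.comap ((↑) : U → V) ≤ _) (E.trans' (E.symm' hw) hw')
        exact Or.inr ⟨u, p', hv, hz, Setoid.trans' _ hu (Setoid.trans' _ hup hp)⟩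

theorem extendSetoid_sup_le_gluedSetoid : extendSetoid U A ⊔ E ≤ gluedSetoid A E := by
  refine sup_le ?_ fun v w h => Or.inl h
  rintro v w (rfl | ⟨hv, hw, h⟩)
  · exact Or.inl (E.refl' v)
  · exact Or.inr ⟨⟨v, hv⟩, ⟨w, hw⟩, E.refl' v, E.refl' w, (le_sup_left : A ≤ _) h⟩

theorem comap_val_extendSetoid_sup :
    (extendSetoid U A ⊔ E).comap (↑) = A ⊔ E.comap ((↑) : U → V) := by
  have hE : E.comap ((↑) : U → V) ≤ A ⊔ E.comap (↑) := le_sup_right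
  refine le_antisymm (fun a b hab => ?_) (sup_le ?_ ?_)
  · rcases extendSetoid_sup_le_gluedSetoid A E hab with h | ⟨u, u', ha, hb, hu⟩
    · exact hE h
    · exact Setoid.trans' _ (hE ha) (Setoid.trans' _ hu (Setoid.symm' _ (hE hb)))
  · exact fun a b hab => (le_sup_left : extendSetoid U A ≤ _) (Or.inr ⟨a.2, b.2, hab⟩)
  · exact fun a b hab => (le_sup_right : E ≤ _) hab

theorem rel_of_extendSetoid_sup_rel {v w : V} (hv : ∀ u : U, ¬E v u)
    (h : (extendSetoid U A ⊔ E) v w) : E v w := by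
  rcases extendSetoid_sup_le_gluedSetoid A E h with h | ⟨u, -, hu, -⟩
  · exact h
  · exact absurd hu (hv u)

theorem exists_rel_of_extendSetoid_sup_rel {u : U} {v : V}
    (h : (extendSetoid U A ⊔ E) u v) : ∃ u' : U, E u' v := by
  rcases extendSetoid_sup_le_gluedSetoid A E h with h | ⟨-, u', -, hv, -⟩
  · exact ⟨u, h⟩
  · exact ⟨u', E.symm' hv⟩

theorem nblocks_extendSetoid_sup_add [Finite V] :
    nblocks (extendSetoid U A ⊔ E) + nblocks (E.comap ((↑) : U → V)) =
      nblocks (A ⊔ E.comap ((↑) : U → V)) + nblocks E := by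
  set R := extendSetoid U A ⊔ E
  set sE := Set.range (Quotient.mk E ∘ ((↑) : U → V))
  set sR := Set.range (Quotient.mk R ∘ ((↑) : U → V))
  set φ := Setoid.map_of_le (le_sup_right : E ≤ R)
  have hφ : ∀ v, φ (Quotient.mk E v) = Quotient.mk R v := fun _ => rfl
  have hpre : φ ⁻¹' sR = sE := by
    ext c
    induction c using Quotient.ind with | _ v => ?_
    simp only [Set.mem_preimage, hφ, sE, sR, Set.mem_range, Function.comp_apply,
      Quotient.eq]
    constructor
    · rintro ⟨u, hu⟩
      exact exists_rel_of_extendSetoid_sup_rel A E hu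
    · rintro ⟨u, hu⟩
      exact ⟨u, (le_sup_right : E ≤ R) hu⟩
  have hsurj : φ.Surjective := Quotient.ind fun v => ⟨Quotient.mk E v, rfl⟩
  have hinj : Set.InjOn φ sEᶜ := by
    intro c hc d _ hcd
    induction c using Quotient.ind with | _ v => ?_
    induction d using Quotient.ind with | _ w => ?_
    refine Quotient.sound (rel_of_extendSetoid_sup_rel A E (fun u hu => hc ?_) ?_)
    · exact ⟨u, Quotient.sound (E.symm' hu)⟩
    · exact Quotient.exact hcd
  have hcompl : sRᶜ.ncard = sEᶜ.ncard := by
    rw [← Set.image_preimage_eq sRᶜ hsurj, Set.preimage_compl, hpre,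
      hinj.ncard_image]
  have hE := Set.ncard_add_ncard_compl sE
  have hR := Set.ncard_add_ncard_compl sR
  have hC : nblocks (A ⊔ E.comap ((↑) : U → V)) = sR.ncard := by
    rw [← comap_val_extendSetoid_sup, nblocks_comap]
  have hP : nblocks (E.comap ((↑) : U → V)) = sE.ncard := nblocks_comap _ _
  rw [hC, hP]
  simp only [nblocks] at hE hR ⊢
  omega

end ExtendSetoidSup

namespace Multigraph

variable (K : Multigraph) {U : Set K.V} (A : Setoid U) (S : Finset K.E)

theorem contract_rel :
    (K.contract A).rel S =
      Relation.Map (K.rel S) (Quotient.mk (extendSetoid U A)) (Quotient.mk _) := by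
  ext q q'
  constructor
  · rintro ⟨e, he, hends⟩
    have key : ∀ p : Sym2 K.V, K.ends e = p →
        p.map (Quotient.mk _) = s(q, q') →
          Relation.Map (K.rel S) (Quotient.mk (extendSetoid U A)) (Quotient.mk _) q q' := by
      refine Sym2.ind fun a b hab hmap => ?_
      rw [Sym2.map_mk] at hmap
      rcases Sym2.eq_iff.mp hmap with ⟨ha, hb⟩ | ⟨ha, hb⟩
      · exact ⟨a, b, ⟨e, he, hab⟩, ha, hb⟩
      · exact ⟨b, a, ⟨e, he, hab.trans Sym2.eq_swap⟩, hb, ha⟩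
    exact key _ rfl hends
  · rintro ⟨a, b, ⟨e, he, hab⟩, rfl, rfl⟩
    exact ⟨e, he, by simp [contract, hab]⟩

theorem comap_mk_eqvGen_contract_rel :
    (Relation.EqvGen.setoid ((K.contract A).rel S)).comap (Quotient.mk _) =
      extendSetoid U A ⊔ Relation.EqvGen.setoid (K.rel S) := by
  set R := extendSetoid U A ⊔ Relation.EqvGen.setoid (K.rel S)
  refine le_antisymm (fun v w h => Quotient.exact ?_) (sup_le ?_ ?_)
  · let g : (K.contract A).V → Quotient R :=
      Quotient.lift (Quotient.mk R) fun _ _ h => Quotient.sound ((le_sup_left : _ ≤ R) h)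
    have hg : Relation.EqvGen.setoid ((K.contract A).rel S) ≤ Setoid.ker g := by
      refine Setoid.eqvGen_le fun q q' hq => ?_
      rw [contract_rel] at hq
      obtain ⟨a, b, hab, rfl, rfl⟩ := hq
      exact Quotient.sound ((le_sup_right : _ ≤ R) (Relation.EqvGen.rel _ _ hab))
    exact hg h
  · intro v w h
    change Relation.EqvGen _ (Quotient.mk _ v) (Quotient.mk _ w)
    rw [Quotient.sound h]
    exact Relation.EqvGen.refl _
  · refine Setoid.eqvGen_le fun a b hab => Relation.EqvGen.rel _ _ ?_
    rw [contract_rel]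
    exact ⟨a, b, hab, rfl, rfl⟩

theorem omega_contract_s13 :
    (K.contract A).omega S = nblocks (A ⊔ K.part U S) + (K.omega S - nblocks (K.part U S)) := by
  have hcomp : (K.contract A).omega S =
      nblocks (extendSetoid U A ⊔ Relation.EqvGen.setoid (K.rel S)) := by
    rw [← comap_mk_eqvGen_contract_rel]
    exact (nblocks_comap_of_surjective_s13 Quotient.mk_surjective _).symm
  have hcount := nblocks_extendSetoid_sup_add A (Relation.EqvGen.setoid (K.rel S))
  have hle := nblocks_comap_le_s13 ((↑) : U → K.V) (Relation.EqvGen.setoid (K.rel S))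
  simp only [omega, part, nblocks] at hcomp hcount hle ⊢
  omega

end Multigraph

theorem negami_contract_expansion_general
    (K : Multigraph) (U : Set K.V) (A : Setoid ↥U) (t x y : ℝ) :
    (K.contract A).negami t x y =
      ∑ B : Setoid ↥U, t ^ nblocks (A ⊔ B) * K.negamiAux U B t x y := by
  simp only [Multigraph.negamiAux, Finset.mul_sum, mul_ite, mul_zero]
  rw [Finset.sum_comm]
  simp only [Finset.sum_ite_eq, Finset.mem_univ, if_true]
  refine Finset.sum_congr rfl fun S _ => ?_
  rw [Multigraph.omega_contract_s13 K A S, pow_add]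
  simp only [mul_assoc]
  rfl

/-- `f(K/A) = Σ_{B ∈ Γ(U)} t^{|A∧B|} · f_B(K)`. -/
theorem negami_contract_expansion
    (K : Multigraph) (U : Set K.V) (n : ℕ) (hn : 1 ≤ n) (hU : Nat.card ↥U = n)
    (A : Setoid ↥U) (t x y : ℝ) :
    (K.contract A).negami t x y =
      ∑ B : Setoid ↥U, t ^ nblocks (A ⊔ B) * K.negamiAux U B t x y :=
  negami_contract_expansion_general K U A t x y
end

section
/- Let U be a finite nonempty set and let A, B be partitions of U. Then |A∧B| + |A∨B| ≥ |A| + |B|, where A∧B is the finest common coarsening of A and B and A∨B is the common refinement of A and B. In particular, since |A∨B| ≤ |U|, one has |A∧B| + |U| ≥ |A| + |B|. -/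
attribute [local instance] Classical.propDecidable

/-! The functions `U → ℚ` constant on the blocks of a partition `A` form a subspace `V_A` of
dimension `|A|`. A function is constant on the blocks of both `A` and `B` exactly when it is
constant on the blocks of their finest common coarsening, so `V_A ∩ V_B = V_{A∧B}`, while
`V_A + V_B ⊆ V_{A∨B}`. The dimension formula `dim (V_A + V_B) + dim (V_A ∩ V_B) = |A| + |B|`
then gives the inequality. -/

namespace Setoid

variable {α : Type*} (K : Type*) [Field K]

def constOnBlocks (s : Setoid α) : Submodule K (α → K) where
  carrier := {f | s ≤ Setoid.ker f}
  add_mem' {f g} hf hg a b hab := by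
    simp only [ker_def, Pi.add_apply] at *
    rw [hf hab, hg hab]
  zero_mem' _ _ _ := rfl
  smul_mem' c f hf a b hab := by
    simp only [ker_def, Pi.smul_apply] at *
    rw [hf hab]

variable {K}

theorem mem_constOnBlocks {s : Setoid α} {f : α → K} :
    f ∈ constOnBlocks K s ↔ s ≤ Setoid.ker f := Iff.rfl

theorem constOnBlocks_antitone : Antitone (constOnBlocks K (α := α)) :=
  fun _ _ hst _ hf => hst.trans hf

theorem constOnBlocks_sup (s t : Setoid α) :
    constOnBlocks K (s ⊔ t) = constOnBlocks K s ⊓ constOnBlocks K t := by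
  ext f
  simp only [Submodule.mem_inf, mem_constOnBlocks, sup_le_iff]

theorem range_funLeft_mk (s : Setoid α) :
    LinearMap.range (LinearMap.funLeft K K (Quotient.mk s)) = constOnBlocks K s := by
  ext f
  constructor
  · rintro ⟨g, rfl⟩ a b hab
    exact congrArg g (Quotient.sound hab)
  · intro hf
    exact ⟨Quotient.lift f hf, rfl⟩

theorem finrank_constOnBlocks [Finite α] (s : Setoid α) :
    Module.finrank K (constOnBlocks K s) = Nat.card (Quotient s) := by
  have : Fintype (Quotient s) := Fintype.ofFinite _
  rw [← range_funLeft_mk, LinearMap.finrank_range_of_inj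
    (LinearMap.funLeft_injective_of_surjective _ _ _ Quotient.mk_surjective),
    Module.finrank_fintype_fun_eq_card, Nat.card_eq_fintype_card]

end Setoid

theorem nblocks_le_card_s18 {α : Type} [Fintype α] (s : Setoid α) : nblocks s ≤ Fintype.card α :=
  Nat.card_eq_fintype_card (α := α) ▸ Nat.card_le_card_of_surjective _ Quotient.mk_surjective

theorem nblocks_add_nblocks_le {α : Type} [Finite α] (A B : Setoid α) :
    nblocks A + nblocks B ≤ nblocks (A ⊔ B) + nblocks (A ⊓ B) := by
  let V : Setoid α → Submodule ℚ (α → ℚ) := Setoid.constOnBlocks ℚ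
  have hdim (s : Setoid α) : Module.finrank ℚ (V s) = nblocks s := Setoid.finrank_constOnBlocks s
  have hsum : V A ⊔ V B ≤ V (A ⊓ B) :=
    sup_le (Setoid.constOnBlocks_antitone inf_le_left) (Setoid.constOnBlocks_antitone inf_le_right)
  have hinf : V A ⊓ V B = V (A ⊔ B) := (Setoid.constOnBlocks_sup A B).symm
  calc nblocks A + nblocks B
      = Module.finrank ℚ ↥(V A ⊔ V B) + Module.finrank ℚ ↥(V (A ⊔ B)) := by
        rw [← hinf, Submodule.finrank_sup_add_finrank_inf_eq, hdim, hdim]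
    _ ≤ Module.finrank ℚ ↥(V (A ⊓ B)) + Module.finrank ℚ ↥(V (A ⊔ B)) :=
        Nat.add_le_add_right (Submodule.finrank_mono hsum) _
    _ = nblocks (A ⊔ B) + nblocks (A ⊓ B) := by rw [hdim, hdim, Nat.add_comm]

theorem partition_blocks_inequality_general
    (U : Type) [Fintype U] (A B : Setoid U) :
    nblocks A + nblocks B ≤ nblocks (A ⊔ B) + nblocks (A ⊓ B) ∧
    nblocks A + nblocks B ≤ nblocks (A ⊔ B) + Fintype.card U :=
  ⟨nblocks_add_nblocks_le A B,
    (nblocks_add_nblocks_le A B).trans (Nat.add_le_add_left (nblocks_le_card_s18 _) _)⟩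

/-- for partitions `A, B` of a finite nonempty set,
`|A∧B| + |A∨B| ≥ |A| + |B|`; in particular `|A∧B| + |U| ≥ |A| + |B|`.
(`A∧B` is the finest common coarsening `A ⊔ B`, and `A∨B` the common refinement
`A ⊓ B`, in the setoid order where finer partitions are smaller.) -/
theorem partition_blocks_inequality
    (U : Type) [Fintype U] [Nonempty U] (A B : Setoid U) :
    nblocks A + nblocks B ≤ nblocks (A ⊔ B) + nblocks (A ⊓ B) ∧
    nblocks A + nblocks B ≤ nblocks (A ⊔ B) + Fintype.card U :=
  partition_blocks_inequality_general U A B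
end
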